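/- arXiv:1901.01645 — 3 statements merged into one kernel-verified Lean document; each statement's English description precedes it below -/
import Mathlib

section
/- Strong consistency of the Horvitz–Thompson variance estimator under Poisson sampling: assume there are constants α ∈ (1/2,1], 0 < C_1 ≤ C_2 with n_0 ≍ N^α and C_1 ≤ N π_{N,i}/n_0 ≤ C_2 for all i, and sup_N N^{-1} Σ_{i=1}^N y_{N,i}^8 < ∞. Then (n_0/N^2)(V̂_N − V_N) → 0 almost surely, where V̂_N = Σ_i y_{N,i}^2(1−π_{N,i})π_{N,i}^{-2} I_{N,i} and V_N = Σ_i y_{N,i}^2(1−π_{N,i})π_{N,i}^{-1}, and the I_{N,i} are independent Bernoulli(π_{N,i}), independently across N. -/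
/-!
Write the centred statistic as `∑ i, b N i * (I N i - π N i)` with
`b N i = n₀ y² (1 - π) / (N π)²`. The lower bound `N π / n₀ ≥ C₁` gives `b N i ≤ y² / (C₁² n₀)`,
and Cauchy–Schwarz with the eighth-moment bound gives `∑ y⁴ ≤ N √M`, so
`∑ i, b N i ^ 2 = O(N ^ (1 - 2α))` because `n₀ ≥ c₁ N ^ α`. Hoeffding's inequality then bounds the
probability of a deviation `≥ ε` by `2 exp (-c ε² N ^ (2α - 1))`, which is summable since `α > 1/2`,
and Borel–Cantelli yields almost sure convergence.
-/

open MeasureTheory ProbabilityTheory Filter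

open scoped Topology NNReal

lemma summable_exp_neg_mul_rpow {c γ : ℝ} (hc : 0 < c) (hγ : 0 < γ) :
    Summable fun N : ℕ => Real.exp (-c * (N : ℝ) ^ γ) := by
  have hpow : Tendsto (fun N : ℕ => (N : ℝ) ^ γ) atTop atTop :=
    (tendsto_rpow_atTop hγ).comp tendsto_natCast_atTop_atTop
  have hlittle := (isLittleO_exp_neg_mul_rpow_atTop hc (-2 / γ)).comp_tendsto hpow
  refine summable_of_isBigO_nat (Real.summable_nat_rpow.2 (by norm_num : (-2 : ℝ) < -1)) ?_
  refine hlittle.isBigO.congr_right fun N => ?_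
  simp only [Function.comp_apply]
  rw [← Real.rpow_mul (Nat.cast_nonneg N), mul_div_cancel₀ _ hγ.ne']

lemma ae_tendsto_zero_of_summable_measureReal_le_abs {Ω : Type*} [MeasurableSpace Ω]
    {μ : Measure Ω} [IsFiniteMeasure μ] {S : ℕ → Ω → ℝ}
    (h : ∀ ε > 0, Summable fun N => μ.real {ω | ε ≤ |S N ω|}) :
    ∀ᵐ ω ∂μ, Tendsto (fun N => S N ω) atTop (𝓝 0) := by
  have hk : ∀ k : ℕ, ∀ᵐ ω ∂μ, ∀ᶠ N in atTop, |S N ω| < 1 / (k + 1) := by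
    intro k
    have htsum : ∑' N, μ {ω | 1 / (k + 1) ≤ |S N ω|} ≠ ⊤ := by
      rw [tsum_congr fun N => (ofReal_measureReal (μ := μ)).symm,
        ← ENNReal.ofReal_tsum_of_nonneg (fun _ => measureReal_nonneg) (h _ (by positivity))]
      exact ENNReal.ofReal_ne_top
    filter_upwards [ae_eventually_notMem htsum] with ω hω
    filter_upwards [hω] with N hN using not_le.1 hN
  filter_upwards [ae_all_iff.2 hk] with ω hω
  refine NormedAddGroup.tendsto_nhds_zero.2 fun ε hε => ?_
  obtain ⟨k, hk⟩ := exists_nat_one_div_lt hε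
  filter_upwards [hω k] with N hN using hN.trans hk

lemma ProbabilityTheory.HasSubgaussianMGF.measureReal_le_abs_le {Ω : Type*}
    [MeasurableSpace Ω] {μ : Measure Ω} [IsFiniteMeasure μ] {X : Ω → ℝ} {c : ℝ≥0}
    (h : HasSubgaussianMGF X c μ) {ε : ℝ} (hε : 0 ≤ ε) :
    μ.real {ω | ε ≤ |X ω|} ≤ 2 * Real.exp (-ε ^ 2 / (2 * c)) := by
  have hsplit : {ω | ε ≤ |X ω|} ⊆ {ω | ε ≤ X ω} ∪ {ω | ε ≤ (-X) ω} := fun ω hω =>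
    (le_abs.1 hω : ε ≤ X ω ∨ ε ≤ -X ω)
  calc μ.real {ω | ε ≤ |X ω|}
      ≤ μ.real {ω | ε ≤ X ω} + μ.real {ω | ε ≤ (-X) ω} :=
        (measureReal_mono hsplit).trans (measureReal_union_le _ _)
    _ ≤ Real.exp (-ε ^ 2 / (2 * c)) + Real.exp (-ε ^ 2 / (2 * c)) :=
        add_le_add (h.measure_ge_le hε) (h.neg.measure_ge_le hε)
    _ = 2 * Real.exp (-ε ^ 2 / (2 * c)) := by ring

lemma hasSubgaussianMGF_mul_sub_integral_of_mem_Icc_zero_one {Ω : Type*} [MeasurableSpace Ω]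
    {μ : Measure Ω} [IsProbabilityMeasure μ] {X : Ω → ℝ} (hm : AEMeasurable X μ)
    (hX : ∀ᵐ ω ∂μ, X ω ∈ Set.Icc (0 : ℝ) 1) (b : ℝ) :
    HasSubgaussianMGF (fun ω => b * (X ω - μ[X])) (‖b‖₊ ^ 2 / 4) μ := by
  convert (hasSubgaussianMGF_of_mem_Icc hm hX).const_mul b using 1
  ext
  rw [NNReal.coe_div, NNReal.coe_pow, coe_nnnorm]
  -- `const_mul` writes its factor as an anonymous constructor, which `NNReal.coe_mul` misses.
  show _ = b ^ 2 * ((‖(1 : ℝ) - 0‖₊ / 2) ^ 2 : ℝ≥0)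
  norm_num [div_eq_mul_inv]

lemma measureReal_le_abs_sum_mul_sub_integral_le {Ω ι : Type*} [MeasurableSpace Ω]
    {μ : Measure Ω} [IsProbabilityMeasure μ] {I : ι → Ω → ℝ} (hindep : iIndepFun I μ)
    (hmeas : ∀ i, Measurable (I i)) (hI : ∀ i, ∀ᵐ ω ∂μ, I i ω ∈ Set.Icc (0 : ℝ) 1)
    (b : ι → ℝ) (s : Finset ι) {ε v : ℝ} (hε : 0 < ε) (hv : ∑ i ∈ s, b i ^ 2 ≤ v) :
    μ.real {ω | ε ≤ |∑ i ∈ s, b i * (I i ω - μ[I i])|} ≤ 2 * Real.exp (-2 * ε ^ 2 / v) := by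
  -- Separate case because `-2 * ε ^ 2 / 0 = 0`; the sum then vanishes identically.
  by_cases hb : ∑ i ∈ s, b i ^ 2 = 0
  · have hb0 : ∀ i ∈ s, b i = 0 := fun i hi =>
      pow_eq_zero_iff two_ne_zero |>.1 <|
        (Finset.sum_eq_zero_iff_of_nonneg fun i _ => sq_nonneg (b i)).1 hb i hi
    have hzero : ∀ ω, ∑ i ∈ s, b i * (I i ω - μ[I i]) = 0 := fun ω =>
      Finset.sum_eq_zero fun i hi => by rw [hb0 i hi, zero_mul]
    have hempty : {ω | ε ≤ |∑ i ∈ s, b i * (I i ω - μ[I i])|} = ∅ := by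
      simp only [hzero, abs_zero, not_le.2 hε, Set.ofPred_false]
    rw [hempty, measureReal_empty]
    positivity
  have hbpos : 0 < ∑ i ∈ s, b i ^ 2 := lt_of_le_of_ne (by positivity) (Ne.symm hb)
  have hindep' : iIndepFun (fun i ω => b i * (I i ω - μ[I i])) μ :=
    hindep.comp (fun i (t : ℝ) => b i * (t - ∫ ω, I i ω ∂μ)) fun i => by fun_prop
  have hsubG : ∀ i ∈ s,
      HasSubgaussianMGF (fun ω => b i * (I i ω - μ[I i])) (‖b i‖₊ ^ 2 / 4) μ := fun i _ =>
    hasSubgaussianMGF_mul_sub_integral_of_mem_Icc_zero_one (hmeas i).aemeasurable (hI i) (b i)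
  have htail := (HasSubgaussianMGF.sum_of_iIndepFun hindep' hsubG).measureReal_le_abs_le hε.le
  simp only [NNReal.coe_sum, NNReal.coe_div, NNReal.coe_pow, coe_nnnorm, NNReal.coe_ofNat,
    Real.norm_eq_abs, sq_abs, ← Finset.sum_div] at htail
  refine htail.trans ?_
  gcongr 2 * Real.exp ?_
  rw [neg_mul, neg_div, neg_div, neg_le_neg_iff,
    show ε ^ 2 / (2 * ((∑ i ∈ s, b i ^ 2) / 4)) = 2 * ε ^ 2 / ∑ i ∈ s, b i ^ 2 by ring]
  exact div_le_div_of_nonneg_left (by positivity) hbpos hv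

lemma sum_mul_inv_sq_mul_sub_sum_mul_inv {ι : Type*} (s : Finset ι) (a p x : ι → ℝ)
    (hp : ∀ i ∈ s, p i ≠ 0) :
    ∑ i ∈ s, a i * (p i)⁻¹ ^ 2 * x i - ∑ i ∈ s, a i * (p i)⁻¹
      = ∑ i ∈ s, a i * (p i)⁻¹ ^ 2 * (x i - p i) := by
  rw [← Finset.sum_sub_distrib]
  refine Finset.sum_congr rfl fun i hi => ?_
  field_simp [hp i hi]

lemma sum_pow_four_le_card_mul_sqrt {ι : Type*} (s : Finset ι) (hs : s.Nonempty) (x : ι → ℝ)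
    {M : ℝ} (hM : (s.card : ℝ)⁻¹ * ∑ i ∈ s, x i ^ 8 ≤ M) :
    ∑ i ∈ s, x i ^ 4 ≤ s.card * √M := by
  have hcard : (0 : ℝ) < s.card := by exact_mod_cast hs.card_pos
  have hsq : (∑ i ∈ s, x i ^ 4) ^ 2 ≤ (s.card : ℝ) ^ 2 * M :=
    calc (∑ i ∈ s, x i ^ 4) ^ 2 ≤ s.card * ∑ i ∈ s, (x i ^ 4) ^ 2 := sq_sum_le_card_mul_sum_sq
      _ = s.card * ∑ i ∈ s, x i ^ 8 := by simp only [← pow_mul]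
      _ ≤ s.card * (s.card * M) := by gcongr; rwa [← inv_mul_le_iff₀ hcard]
      _ = (s.card : ℝ) ^ 2 * M := by ring
  calc ∑ i ∈ s, x i ^ 4 = √((∑ i ∈ s, x i ^ 4) ^ 2) := (Real.sqrt_sq (by positivity)).symm
    _ ≤ √((s.card : ℝ) ^ 2 * M) := Real.sqrt_le_sqrt hsq
    _ = s.card * √M := by rw [Real.sqrt_mul (sq_nonneg _), Real.sqrt_sq hcard.le]

lemma div_sq_mul_inv_sq_le {n₀ N p y C : ℝ} (hn₀ : 0 < n₀) (hC : 0 < C) (hp : p ∈ Set.Ioo 0 1)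
    (hCp : C ≤ N * p / n₀) :
    n₀ / N ^ 2 * (y ^ 2 * (1 - p) * p⁻¹ ^ 2) ≤ y ^ 2 / (C ^ 2 * n₀) := by
  have hCn₀ : C * n₀ ≤ N * p := (le_div_iff₀ hn₀).1 hCp
  have hNp : 0 < N * p := (mul_pos hC hn₀).trans_le hCn₀
  have hN : N ≠ 0 := left_ne_zero_of_mul hNp.ne'
  calc n₀ / N ^ 2 * (y ^ 2 * (1 - p) * p⁻¹ ^ 2) = (1 - p) * (n₀ * y ^ 2 / (N * p) ^ 2) := by
        field_simp
    _ ≤ 1 * (n₀ * y ^ 2 / (C * n₀) ^ 2) := by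
        gcongr
        linarith [hp.1]
    _ = y ^ 2 / (C ^ 2 * n₀) := by field_simp

lemma sum_sq_div_sq_mul_inv_sq_le {N : ℕ} (hN : 1 ≤ N) (y p : Fin N → ℝ)
    {n₀ α c₁ C₁ M : ℝ} (hc₁ : 0 < c₁) (hC₁ : 0 < C₁) (hp : ∀ i, p i ∈ Set.Ioo 0 1)
    (hn₀ : c₁ * (N : ℝ) ^ α ≤ n₀) (hbound : ∀ i, C₁ ≤ N * p i / n₀)
    (hM : (N : ℝ)⁻¹ * ∑ i, y i ^ 8 ≤ M) :
    ∑ i, (n₀ / (N : ℝ) ^ 2 * (y i ^ 2 * (1 - p i) * (p i)⁻¹ ^ 2)) ^ 2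
      ≤ √M / (C₁ ^ 4 * c₁ ^ 2) * (N : ℝ) ^ (1 - 2 * α) := by
  have hNpos : (0 : ℝ) < N := by exact_mod_cast hN
  have hNα : 0 < (N : ℝ) ^ α := Real.rpow_pos_of_pos hNpos α
  have hn₀pos : 0 < n₀ := (mul_pos hc₁ hNα).trans_le hn₀
  have hy4 : ∑ i, y i ^ 4 ≤ N * √M := by
    simpa using sum_pow_four_le_card_mul_sqrt Finset.univ
      (Finset.univ_nonempty_iff.2 ⟨⟨0, hN⟩⟩) y (by simpa using hM)
  calc ∑ i, (n₀ / (N : ℝ) ^ 2 * (y i ^ 2 * (1 - p i) * (p i)⁻¹ ^ 2)) ^ 2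
      ≤ ∑ i, (y i ^ 2 / (C₁ ^ 2 * n₀)) ^ 2 := by
        gcongr with i
        · have := sub_pos.2 (hp i).2
          positivity
        · exact div_sq_mul_inv_sq_le hn₀pos hC₁ (hp i) (hbound i)
    _ = (∑ i, y i ^ 4) / (C₁ ^ 4 * n₀ ^ 2) := by
        rw [Finset.sum_div]
        exact Finset.sum_congr rfl fun i _ => by ring
    _ ≤ N * √M / (C₁ ^ 4 * (c₁ * (N : ℝ) ^ α) ^ 2) := by gcongr
    _ = √M / (C₁ ^ 4 * c₁ ^ 2) * (N : ℝ) ^ (1 - 2 * α) := by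
        rw [Real.rpow_sub hNpos, Real.rpow_one, mul_comm 2 α, Real.rpow_mul hNpos.le,
          Real.rpow_two]
        field_simp

theorem poisson_variance_estimator_strong_consistency_general
    {Ω : Type*} [MeasureSpace Ω] [IsProbabilityMeasure (ℙ : Measure Ω)]
    (y π : (N : ℕ) → Fin N → ℝ) (I : (N : ℕ) → Fin N → Ω → ℝ)
    (hπ : ∀ N i, π N i ∈ Set.Ioo (0 : ℝ) 1)
    (hmeas : ∀ N i, Measurable (I N i))
    (h01 : ∀ N i ω, I N i ω = 0 ∨ I N i ω = 1)
    (hmean : ∀ N i, ∫ ω, I N i ω = π N i)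
    (hindep : iIndepFun
      (fun p : (Σ N : ℕ, Fin N) => I p.1 p.2) ℙ)
    (n₀ : ℕ → ℝ)
    (α : ℝ) (hα : α ∈ Set.Ioc (1 / 2 : ℝ) 1)
    (c₁ c₂ : ℝ) (hc₁ : 0 < c₁)
    (hasymp : ∀ N : ℕ, 1 ≤ N → c₁ * (N : ℝ) ^ α ≤ n₀ N ∧ n₀ N ≤ c₂ * (N : ℝ) ^ α)
    (C₁ C₂ : ℝ) (hC₁ : 0 < C₁)
    (hbound : ∀ N : ℕ, 1 ≤ N → ∀ i,
      C₁ ≤ (N : ℝ) * π N i / n₀ N ∧ (N : ℝ) * π N i / n₀ N ≤ C₂)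
    (M : ℝ) (hM : ∀ N : ℕ, 1 ≤ N → (N : ℝ)⁻¹ * ∑ i, (y N i) ^ 8 ≤ M) :
    ∀ᵐ ω ∂(ℙ : Measure Ω),
      Tendsto (fun N : ℕ =>
          n₀ N / (N : ℝ) ^ 2 *
            ((∑ i, (y N i) ^ 2 * (1 - π N i) * ((π N i)⁻¹) ^ 2 * I N i ω)
              - ∑ i, (y N i) ^ 2 * (1 - π N i) * (π N i)⁻¹))
        atTop (nhds 0) := by
  set b : (N : ℕ) → Fin N → ℝ := fun N i =>
    n₀ N / (N : ℝ) ^ 2 * (y N i ^ 2 * (1 - π N i) * (π N i)⁻¹ ^ 2)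
  have hstat : ∀ N ω, n₀ N / (N : ℝ) ^ 2 *
      ((∑ i, (y N i) ^ 2 * (1 - π N i) * ((π N i)⁻¹) ^ 2 * I N i ω)
        - ∑ i, (y N i) ^ 2 * (1 - π N i) * (π N i)⁻¹)
      = ∑ i, b N i * (I N i ω - π N i) := fun N ω => by
    rw [sum_mul_inv_sq_mul_sub_sum_mul_inv _ _ _ _ fun i _ => (hπ N i).1.ne', Finset.mul_sum]
    simp only [b, mul_assoc]
  -- `+ 1` keeps the constant positive when `M = 0`.
  set K := √M / (C₁ ^ 4 * c₁ ^ 2) + 1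
  have hK : 0 < K := by positivity
  have htail : ∀ ε > 0, ∀ N, 1 ≤ N →
      (ℙ : Measure Ω).real {ω | ε ≤ |∑ i, b N i * (I N i ω - π N i)|}
        ≤ 2 * Real.exp (-(2 * ε ^ 2 / K) * (N : ℝ) ^ (2 * α - 1)) := by
    intro ε hε N hN
    have hvar : ∑ i, b N i ^ 2 ≤ K * (N : ℝ) ^ (1 - 2 * α) :=
      (sum_sq_div_sq_mul_inv_sq_le hN (y N) (π N) hc₁ hC₁ (hπ N) (hasymp N hN).1
        (fun i => (hbound N hN i).1) (hM N hN)).trans (by gcongr; linarith)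
    have hhoeffding := measureReal_le_abs_sum_mul_sub_integral_le
      (hindep.precomp sigma_mk_injective) (hmeas N)
      (fun i => ae_of_all _ fun ω => by rcases h01 N i ω with h | h <;> simp [h])
      (b N) Finset.univ hε hvar
    simp only [hmean] at hhoeffding
    convert hhoeffding using 3
    rw [show 1 - 2 * α = -(2 * α - 1) by ring, Real.rpow_neg (Nat.cast_nonneg _)]
    field_simp
  simp only [hstat]
  refine ae_tendsto_zero_of_summable_measureReal_le_abs fun ε hε => ?_
  have hγ : 0 < 2 * α - 1 := by linarith [hα.1]
  refine ((summable_exp_neg_mul_rpow (c := 2 * ε ^ 2 / K) (by positivity) hγ).mul_left 2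
    ).of_norm_bounded_eventually_nat ?_
  filter_upwards [eventually_ge_atTop 1] with N hN
  rw [Real.norm_of_nonneg measureReal_nonneg]
  exact htail ε hε N hN

/-- Strong consistency of the Horvitz–Thompson variance estimator under Poisson
sampling: if `n₀ ≍ N ^ α` with `α ∈ (1/2, 1]`, `C₁ ≤ N * π_{N,i} / n₀ ≤ C₂` for
all `i`, and the eighth population moments are uniformly bounded, then
`(n₀ / N²) * (V̂_N - V_N) → 0` almost surely, where the `I_{N,i}` are independent
Bernoulli(`π_{N,i}`) indicators, independently across `N`. -/
theorem poisson_variance_estimator_strong_consistency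
    {Ω : Type*} [MeasureSpace Ω] [IsProbabilityMeasure (ℙ : Measure Ω)]
    (y π : (N : ℕ) → Fin N → ℝ) (I : (N : ℕ) → Fin N → Ω → ℝ)
    (hπ : ∀ N i, π N i ∈ Set.Ioo (0 : ℝ) 1)
    (hmeas : ∀ N i, Measurable (I N i))
    (h01 : ∀ N i ω, I N i ω = 0 ∨ I N i ω = 1)
    (hmean : ∀ N i, ∫ ω, I N i ω = π N i)
    (hindep : iIndepFun
      (fun p : (Σ N : ℕ, Fin N) => I p.1 p.2) ℙ)
    (n₀ : ℕ → ℝ) (hn₀ : ∀ N, n₀ N = ∑ i, π N i)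
    (α : ℝ) (hα : α ∈ Set.Ioc (1 / 2 : ℝ) 1)
    (c₁ c₂ : ℝ) (hc₁ : 0 < c₁)
    (hasymp : ∀ N : ℕ, 1 ≤ N → c₁ * (N : ℝ) ^ α ≤ n₀ N ∧ n₀ N ≤ c₂ * (N : ℝ) ^ α)
    (C₁ C₂ : ℝ) (hC₁ : 0 < C₁) (hC₁₂ : C₁ ≤ C₂)
    (hbound : ∀ N : ℕ, 1 ≤ N → ∀ i,
      C₁ ≤ (N : ℝ) * π N i / n₀ N ∧ (N : ℝ) * π N i / n₀ N ≤ C₂)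
    (M : ℝ) (hM : ∀ N : ℕ, 1 ≤ N → (N : ℝ)⁻¹ * ∑ i, (y N i) ^ 8 ≤ M) :
    ∀ᵐ ω ∂(ℙ : Measure Ω),
      Tendsto (fun N : ℕ =>
          n₀ N / (N : ℝ) ^ 2 *
            ((∑ i, (y N i) ^ 2 * (1 - π N i) * ((π N i)⁻¹) ^ 2 * I N i ω)
              - ∑ i, (y N i) ^ 2 * (1 - π N i) * (π N i)⁻¹))
        atTop (nhds 0) :=
  poisson_variance_estimator_strong_consistency_general y π I hπ hmeas h01 hmean hindep n₀ α hα c₁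
    c₂ hc₁ hasymp C₁ C₂ hC₁ hbound M hM
end

section
/- Mixed moment bound for SRS indicators: under simple random sampling of size n from N with n/N bounded away from 1, for distinct i, j, k: E[(I_i N/n − 1)(I_j N/n − 1)(I_k N/n − 1)^2] = O(N n^{-2}). -/
open MeasureTheory ProbabilityTheory Filter

/-!
Because `I_k² = I_k`, the integrand is an affine combination of products of at most three
distinct indicators, so by exchangeability its expectation is a polynomial in `a = N/n` and the
joint inclusion probabilities `π₁, π₂, π₃`. Substituting the hypergeometric values, the
expectation collapses to `(N-n)((N-n)(2N-4n-nN) + 2n²) / (n³(N-1)(N-2))`: the terms of order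
`N²/n²` cancel, and the numerator is `O(nN³)`, which gives `O(N/n²)`.
-/

open Finset

section ZeroOneProducts

variable {ι Ω : Type*} {f : ι → Ω → ℝ} {s : Finset ι}

theorem prod_eq_indicator_of_zero_or_one (h01 : ∀ i ∈ s, ∀ ω, f i ω = 0 ∨ f i ω = 1) :
    (fun ω => ∏ i ∈ s, f i ω) = {ω | ∀ i ∈ s, f i ω = 1}.indicator 1 := by
  ext ω
  rw [Set.indicator_apply]
  split_ifs with hω
  · exact prod_eq_one hω
  · obtain ⟨i, hi, hne⟩ : ∃ i ∈ s, f i ω ≠ 1 := by simpa using hω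
    exact prod_eq_zero hi ((h01 i hi ω).resolve_right hne)

variable [MeasurableSpace Ω] {μ : Measure Ω}

theorem measurableSet_forall_eq_one (hf : ∀ i ∈ s, Measurable (f i)) :
    MeasurableSet {ω | ∀ i ∈ s, f i ω = 1} := by
  simp only [Set.ofPred_forall]
  exact .biInter s.countable_toSet fun i hi => hf i hi (measurableSet_singleton 1)

theorem integral_prod_of_zero_or_one (hf : ∀ i ∈ s, Measurable (f i))
    (h01 : ∀ i ∈ s, ∀ ω, f i ω = 0 ∨ f i ω = 1) :
    ∫ ω, ∏ i ∈ s, f i ω ∂μ = μ.real {ω | ∀ i ∈ s, f i ω = 1} := by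
  rw [prod_eq_indicator_of_zero_or_one h01]
  exact integral_indicator_one (measurableSet_forall_eq_one hf)

end ZeroOneProducts

def mixedMoment (a : ℝ) (p : ℕ → ℝ) : ℝ :=
  (a ^ 2 - 2 * a) * (a ^ 2 * p 3 - 2 * a * p 2 + p 1) + (a ^ 2 * p 2 - 2 * a * p 1 + 1)

theorem integral_eq_mixedMoment_of_exchangeable {ι Ω : Type*} [DecidableEq ι]
    [MeasurableSpace Ω] {μ : Measure Ω} [IsProbabilityMeasure μ] {I : ι → Ω → ℝ}
    (hmeas : ∀ i, Measurable (I i)) (h01 : ∀ i ω, I i ω = 0 ∨ I i ω = 1) {p : ℕ → ℝ}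
    (hp : ∀ s : Finset ι, s.card ≤ 3 → ∫ ω, ∏ t ∈ s, I t ω ∂μ = p s.card)
    {i j k : ι} (hij : i ≠ j) (hik : i ≠ k) (hjk : j ≠ k) (a : ℝ) :
    ∫ ω, (a * I i ω - 1) * (a * I j ω - 1) * (a * I k ω - 1) ^ 2 ∂μ = mixedMoment a p := by
  have hbdd (x : ι) : ∀ᵐ ω ∂μ, ‖I x ω‖ ≤ 1 :=
    ae_of_all _ fun ω => by rcases h01 x ω with h | h <;> simp [h]
  have hint₁ (x : ι) : Integrable (I x) μ := .of_bound (hmeas x).aestronglyMeasurable 1 (hbdd x)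
  have hint₂ (x y : ι) : Integrable (fun ω => I x ω * I y ω) μ :=
    (hint₁ x).mul_bdd (hmeas y).aestronglyMeasurable (hbdd y)
  have hint₃ (x y z : ι) : Integrable (fun ω => I x ω * I y ω * I z ω) μ :=
    (hint₂ x y).mul_bdd (hmeas z).aestronglyMeasurable (hbdd z)
  have hp₁ (x : ι) : ∫ ω, I x ω ∂μ = p 1 := by simpa using hp {x} (by simp)
  have hp₂ {x y : ι} (hxy : x ≠ y) : ∫ ω, I x ω * I y ω ∂μ = p 2 := by
    simpa [prod_pair hxy, card_pair hxy] using hp {x, y} (card_le_two.trans (by norm_num))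
  have hp₃ : ∫ ω, I i ω * I j ω * I k ω ∂μ = p 3 := by
    simpa [prod_insert, hij, hik, prod_pair hjk, card_pair hjk, mul_assoc] using
      hp {i, j, k} card_le_three
  have hexp : ∀ ω, (a * I i ω - 1) * (a * I j ω - 1) * (a * I k ω - 1) ^ 2
      = (a ^ 2 - 2 * a) * (a ^ 2 * (I i ω * I j ω * I k ω) - a * (I i ω * I k ω)
          - a * (I j ω * I k ω) + I k ω)
        + (a ^ 2 * (I i ω * I j ω) - a * I i ω - a * I j ω + 1) := fun ω => by
    rcases h01 k ω with h | h <;> rw [h] <;> ring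
  simp_rw [hexp]
  rw [integral_add (by fun_prop) (by fun_prop), integral_const_mul,
    integral_add (by fun_prop) (by fun_prop), integral_sub (by fun_prop) (by fun_prop),
    integral_sub (by fun_prop) (by fun_prop), integral_add (by fun_prop) (by fun_prop),
    integral_sub (by fun_prop) (by fun_prop), integral_sub (by fun_prop) (by fun_prop)]
  simp only [integral_const_mul, hp₁, hp₂ hij, hp₂ hik, hp₂ hjk, hp₃, integral_const,
    probReal_univ, smul_eq_mul, mul_one, mixedMoment]
  ring

noncomputable def jointInclusionProb (n N : ℝ) (m : ℕ) : ℝ := ∏ t ∈ range m, (n - t) / (N - t)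

theorem jointInclusionProb_nonneg {n N m : ℕ} (hm : m ≤ N) :
    0 ≤ jointInclusionProb n N m := by
  rcases lt_or_ge n m with hnm | hmn
  · exact (prod_eq_zero (mem_range.2 hnm) (by simp)).ge
  · refine prod_nonneg fun t ht => ?_
    have htm := mem_range.1 ht
    exact div_nonneg (sub_nonneg.2 (mod_cast (by omega : t ≤ n)))
      (sub_nonneg.2 (mod_cast (by omega : t ≤ N)))

theorem mixedMoment_jointInclusionProb {n N : ℝ} (hn : n ≠ 0) (hN : N ≠ 0) (hN₁ : N - 1 ≠ 0)
    (hN₂ : N - 2 ≠ 0) :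
    mixedMoment (N / n) (jointInclusionProb n N)
      = ((N - n) ^ 2 * (2 * N - 4 * n - n * N) + 2 * n ^ 2 * (N - n))
        / (n ^ 3 * (N - 1) * (N - 2)) := by
  simp only [mixedMoment, jointInclusionProb, prod_range_succ, prod_range_zero, Nat.cast_zero,
    Nat.cast_one, Nat.cast_ofNat, sub_zero, one_mul]
  field_simp
  ring

theorem abs_mixedMoment_jointInclusionProb_le {n N : ℝ} (hn : 1 ≤ n) (hnN : n ≤ N)
    (hN : 3 ≤ N) : |mixedMoment (N / n) (jointInclusionProb n N)| ≤ 25 * N / n ^ 2 := by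
  rw [mixedMoment_jointInclusionProb (by positivity) (by positivity) (by linarith) (by linarith)]
  have hD : 0 < n ^ 3 * (N - 1) * (N - 2) := by
    have : 0 < N - 1 := by linarith
    have : 0 < N - 2 := by linarith
    positivity
  have hP : |(N - n) ^ 2 * (2 * N - 4 * n - n * N) + 2 * n ^ 2 * (N - n)| ≤ 5 * n * N ^ 3 := by
    have hd : (N - n) ^ 2 ≤ N ^ 2 := by nlinarith
    have hlin : |2 * N - 4 * n - n * N| ≤ 3 * n * N := abs_le.2 ⟨by nlinarith, by nlinarith⟩
    calc |(N - n) ^ 2 * (2 * N - 4 * n - n * N) + 2 * n ^ 2 * (N - n)|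
        ≤ (N - n) ^ 2 * |2 * N - 4 * n - n * N| + 2 * n ^ 2 * (N - n) := by
          refine (abs_add_le _ _).trans ?_
          rw [abs_mul, abs_of_nonneg (sq_nonneg (N - n)),
            abs_of_nonneg (show 0 ≤ 2 * n ^ 2 * (N - n) by nlinarith)]
      _ ≤ N ^ 2 * (3 * n * N) + 2 * n ^ 2 * N := by gcongr; linarith
      _ ≤ 5 * n * N ^ 3 := by
          have : n ≤ N ^ 2 := by nlinarith
          nlinarith [mul_le_mul_of_nonneg_left this (by positivity : 0 ≤ 2 * n * N)]
  have hden : N ^ 2 ≤ 5 * ((N - 1) * (N - 2)) := by nlinarith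
  rw [abs_div, abs_of_pos hD, div_le_div_iff₀ hD (by positivity)]
  calc |(N - n) ^ 2 * (2 * N - 4 * n - n * N) + 2 * n ^ 2 * (N - n)| * n ^ 2
      ≤ 5 * n * N ^ 3 * n ^ 2 := by gcongr
    _ = 5 * n ^ 3 * N * N ^ 2 := by ring
    _ ≤ 5 * n ^ 3 * N * (5 * ((N - 1) * (N - 2))) := by gcongr
    _ = 25 * N * (n ^ 3 * (N - 1) * (N - 2)) := by ring

theorem tendsto_atTop_of_const_mul_rpow_le {f : ℕ → ℝ} {c β : ℝ} (hc : 0 < c) (hβ : 0 < β)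
    (hf : ∀ N : ℕ, 1 ≤ N → c * (N : ℝ) ^ β ≤ f N) : Tendsto f atTop atTop :=
  tendsto_atTop_mono' atTop (eventually_atTop.2 ⟨1, hf⟩)
    (((tendsto_rpow_atTop hβ).comp tendsto_natCast_atTop_atTop).const_mul_atTop hc)

/-- Mixed moment bound for SRS indicators: under simple random sampling of size
`n N` from `N` units, with `n ≍ N^β` for some `β ∈ (1/2,1]` and `n/N ≤ 1-κ`, for
distinct indices `i, j, k, l` one has
`E[(I_i N/n - 1)(I_j N/n - 1)(I_k N/n - 1)²] = O(N n⁻²)`.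
Joint inclusion probabilities are hypergeometric:
`P(all of a set s of ≤ 4 units are sampled) = ∏_{t < |s|} (n - t)/(N - t)`. -/
theorem srs_mixed_product_moment_bound
    (Ω : ℕ → Type*) [∀ N, MeasureSpace (Ω N)]
    [∀ N, IsProbabilityMeasure (ℙ : Measure (Ω N))]
    (n : ℕ → ℕ) (I : (N : ℕ) → Fin N → Ω N → ℝ)
    (hmeas : ∀ N i, Measurable (I N i))
    (h01 : ∀ N i ω, I N i ω = 0 ∨ I N i ω = 1)
    (hhyper : ∀ N : ℕ, ∀ s : Finset (Fin N), s.card ≤ 4 →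
      ℙ {ω | ∀ i ∈ s, I N i ω = 1}
        = ENNReal.ofReal (∏ t ∈ Finset.range s.card, ((n N : ℝ) - t) / ((N : ℝ) - t)))
    (β : ℝ) (hβ : β ∈ Set.Ioc (1 / 2 : ℝ) 1)
    (c₁ c₂ : ℝ) (hc₁ : 0 < c₁)
    (hasymp : ∀ N : ℕ, 1 ≤ N →
      c₁ * (N : ℝ) ^ β ≤ (n N : ℝ) ∧ (n N : ℝ) ≤ c₂ * (N : ℝ) ^ β)
    (κ : ℝ) (hκ : κ ∈ Set.Ioo (0 : ℝ) 1)
    (hfrac : ∀ N : ℕ, 1 ≤ N → (n N : ℝ) / N ≤ 1 - κ) :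
    ∃ (C : ℝ) (N₀ : ℕ), ∀ N : ℕ, N₀ ≤ N →
      ∀ i j k : Fin N, i ≠ j → i ≠ k → j ≠ k →
        |∫ ω, (I N i ω * N / n N - 1) * (I N j ω * N / n N - 1) *
              (I N k ω * N / n N - 1) ^ 2|
          ≤ C * N / (n N : ℝ) ^ 2 := by
  have hn : Tendsto (fun N => (n N : ℝ)) atTop atTop :=
    tendsto_atTop_of_const_mul_rpow_le hc₁ (by linarith [hβ.1]) fun N hN => (hasymp N hN).1
  obtain ⟨N₀, hN₀⟩ := eventually_atTop.1 ((eventually_ge_atTop 3).and (hn.eventually_ge_atTop 1))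
  refine ⟨25, N₀, fun N hN i j k hij hik hjk => ?_⟩
  obtain ⟨hN₃, hn₁⟩ := hN₀ N hN
  have hN₃' : (3 : ℝ) ≤ N := by exact_mod_cast hN₃
  have hnN : (n N : ℝ) ≤ N :=
    (div_le_one (by positivity)).1 ((hfrac N (by omega)).trans (by linarith [hκ.1]))
  have hmom (s : Finset (Fin N)) (hs : s.card ≤ 3) :
      ∫ ω, ∏ t ∈ s, I N t ω = jointInclusionProb (n N) N s.card := by
    rw [integral_prod_of_zero_or_one (fun t _ => hmeas N t) (fun t _ => h01 N t),
      measureReal_def, hhyper N s (by omega)]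
    exact ENNReal.toReal_ofReal (jointInclusionProb_nonneg (by simpa using s.card_le_univ))
  have hscale (x : ℝ) : x * N / n N = N / n N * x := by ring
  simp_rw [hscale]
  rw [integral_eq_mixedMoment_of_exchangeable (hmeas N) (h01 N) hmom hij hik hjk]
  exact abs_mixedMoment_jointInclusionProb_le hn₁ hnN hN₃'
end

section
/- Almost sure convergence of inverse-probability weights under Poisson sampling: under C_1 ≤ N π_{N,i}/n_0 ≤ C_2 for all i and n_0 ≍ N^α with α ∈ (1/2,1], one has N^{-1} Σ_{i=1}^N (π_{N,i}^{-1} I_{N,i} − 1) → 0 almost surely as N → ∞, where for each N the I_{N,i} are independent Bernoulli(π_{N,i}) and independent across N. -/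
/-!
The centred weights `Y_{N,i} = π_{N,i}⁻¹ I_{N,i} - 1` are independent, have mean zero,
`|Y_{N,i}| ≤ π_{N,i}⁻¹ ≤ M_N` and `E Y_{N,i}² = π_{N,i}⁻¹ - 1 ≤ M_N`, where
`M_N = (C₁ c₁)⁻¹ N^{1-α}`. Expanding the fourth power of a sum of independent centred variables,
only the diagonal and the paired terms survive, so the normalised sum `S_N` satisfies
`E S_N⁴ ≤ M_N⁴ / N³ + 3 M_N² / N² = O(N^{-2α})`, which is summable because `α > 1/2`.
Hence `∑ S_N⁴ < ∞` almost surely, and in particular `S_N → 0` almost surely.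
-/

open MeasureTheory ProbabilityTheory Filter Finset

section

variable {Ω : Type*} {mΩ : MeasurableSpace Ω} {μ : Measure Ω}

lemma MeasureTheory.MemLp.integrable_pow_of_le [IsFiniteMeasure μ] {X : Ω → ℝ} {n k : ℕ}
    (hX : MemLp X n μ) (hk : k ≤ n) : Integrable (fun ω => X ω ^ k) μ :=
  ((hX.mono_exponent (by exact_mod_cast hk)).integrable_norm_pow').mono'
    (hX.aestronglyMeasurable.pow k) (ae_of_all _ fun ω => (norm_pow _ _).le)

lemma ProbabilityTheory.IndepFun.integral_add_pow [IsFiniteMeasure μ] {X Y : Ω → ℝ} {n : ℕ}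
    (hXY : IndepFun X Y μ) (hX : MemLp X n μ) (hY : MemLp Y n μ) :
    ∫ ω, (X ω + Y ω) ^ n ∂μ
      = ∑ k ∈ range (n + 1), (∫ ω, X ω ^ k ∂μ) * (∫ ω, Y ω ^ (n - k) ∂μ) * n.choose k := by
  have hpow : ∀ k, IndepFun (fun ω => X ω ^ k) (fun ω => Y ω ^ (n - k)) μ := fun k =>
    hXY.comp (measurable_id.pow_const k) (measurable_id.pow_const (n - k))
  have hint : ∀ k ∈ range (n + 1),
      Integrable (fun ω => X ω ^ k * Y ω ^ (n - k) * n.choose k) μ := fun k hk =>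
    ((hpow k).integrable_mul (hX.integrable_pow_of_le (mem_range_succ_iff.mp hk))
      (hY.integrable_pow_of_le (n.sub_le k))).mul_const _
  simp_rw [add_pow]
  rw [integral_finsetSum _ hint]
  refine sum_congr rfl fun k _ => ?_
  rw [integral_mul_const, (hpow k).integral_fun_mul_eq_mul_integral
    (hX.aestronglyMeasurable.pow k) (hY.aestronglyMeasurable.pow (n - k))]

lemma ProbabilityTheory.IndepFun.integral_add_pow_four [IsProbabilityMeasure μ] {X Y : Ω → ℝ}
    (hXY : IndepFun X Y μ) (hX : MemLp X 4 μ) (hY : MemLp Y 4 μ)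
    (hX0 : ∫ ω, X ω ∂μ = 0) (hY0 : ∫ ω, Y ω ∂μ = 0) :
    ∫ ω, (X ω + Y ω) ^ 4 ∂μ
      = ∫ ω, X ω ^ 4 ∂μ + 6 * (∫ ω, X ω ^ 2 ∂μ) * (∫ ω, Y ω ^ 2 ∂μ) + ∫ ω, Y ω ^ 4 ∂μ := by
  rw [hXY.integral_add_pow (by exact_mod_cast hX) (by exact_mod_cast hY)]
  simp [sum_range_succ, hX0, hY0, Nat.choose]
  ring

lemma ProbabilityTheory.iIndepFun.integral_sum_sq [IsProbabilityMeasure μ] {ι : Type*}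
    {Y : ι → Ω → ℝ} (hind : iIndepFun Y μ) (hY : ∀ i, MemLp (Y i) 2 μ)
    (h0 : ∀ i, ∫ ω, Y i ω ∂μ = 0) (s : Finset ι) :
    ∫ ω, (∑ i ∈ s, Y i ω) ^ 2 ∂μ = ∑ i ∈ s, ∫ ω, Y i ω ^ 2 ∂μ := by
  have hsum0 : ∫ ω, (∑ i ∈ s, Y i) ω ∂μ = 0 := by
    simp_rw [Finset.sum_apply]
    rw [integral_finsetSum _ fun i _ => (hY i).integrable one_le_two]
    simp [h0]
  have hvar := IndepFun.variance_sum (s := s) (fun i _ => hY i)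
    fun i _ j _ hij => hind.indepFun hij
  rw [variance_of_integral_eq_zero
    (memLp_finsetSum' s fun i _ => hY i).aestronglyMeasurable.aemeasurable hsum0] at hvar
  simp_rw [Finset.sum_apply] at hvar
  rw [hvar]
  exact sum_congr rfl fun i _ =>
    variance_of_integral_eq_zero (hY i).aestronglyMeasurable.aemeasurable (h0 i)

lemma ProbabilityTheory.iIndepFun.integral_sum_pow_four_le [IsProbabilityMeasure μ] {ι : Type*}
    {Y : ι → Ω → ℝ} (hind : iIndepFun Y μ) (hY : ∀ i, MemLp (Y i) 4 μ)
    (h0 : ∀ i, ∫ ω, Y i ω ∂μ = 0) (s : Finset ι) :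
    ∫ ω, (∑ i ∈ s, Y i ω) ^ 4 ∂μ
      ≤ ∑ i ∈ s, ∫ ω, Y i ω ^ 4 ∂μ + 3 * (∑ i ∈ s, ∫ ω, Y i ω ^ 2 ∂μ) ^ 2 := by
  classical
  induction s using Finset.induction_on with
  | empty => simp
  | insert a s ha ih =>
    have hS : MemLp (fun ω => ∑ i ∈ s, Y i ω) 4 μ := memLp_finsetSum s fun i _ => hY i
    have hS0 : ∫ ω, ∑ i ∈ s, Y i ω ∂μ = 0 := by
      rw [integral_finsetSum _ fun i _ => (hY i).integrable (by norm_num)]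
      simp [h0]
    have hSa : IndepFun (fun ω => ∑ i ∈ s, Y i ω) (Y a) μ := by
      simpa only [Finset.sum_fn] using hind.indepFun_finsetSum_of_notMem₀
        (fun i => (hY i).aestronglyMeasurable.aemeasurable) ha
    have hsq := hind.integral_sum_sq (fun i => (hY i).mono_exponent (by norm_num)) h0 s
    have hsq_nonneg : 0 ≤ ∫ ω, (∑ i ∈ s, Y i ω) ^ 2 ∂μ := integral_nonneg fun ω => sq_nonneg _
    have ha_nonneg : 0 ≤ ∫ ω, Y a ω ^ 2 ∂μ := integral_nonneg fun ω => sq_nonneg _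
    simp_rw [sum_insert ha, add_comm (Y a _)]
    rw [hSa.integral_add_pow_four hS (hY a) hS0 (h0 a)]
    rw [hsq] at hsq_nonneg ⊢
    nlinarith

lemma ae_tendsto_zero_of_summable_integral_pow {X : ℕ → Ω → ℝ} {p : ℕ}
    (hp : p ≠ 0) (hX : ∀ n, MemLp (X n) p μ)
    (hsum : Summable fun n => ∫ ω, |X n ω| ^ p ∂μ) :
    ∀ᵐ ω ∂μ, Tendsto (fun n => X n ω) atTop (nhds 0) := by
  set f : ℕ → Ω → ENNReal := fun n ω => ENNReal.ofReal (|X n ω| ^ p)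
  have hf : ∀ n, AEMeasurable (f n) μ := fun n =>
    ((hX n).aestronglyMeasurable.aemeasurable.abs.pow_const p).ennreal_ofReal
  have hlint : ∀ n, ∫⁻ ω, f n ω ∂μ = ENNReal.ofReal (∫ ω, |X n ω| ^ p ∂μ) := fun n =>
    (ofReal_integral_eq_lintegral_ofReal (by simpa using (hX n).integrable_norm_pow hp)
      (ae_of_all _ fun ω => by positivity)).symm
  have htsum : ∫⁻ ω, ∑' n, f n ω ∂μ ≠ ⊤ := by
    rw [lintegral_tsum hf]
    simp_rw [hlint]
    rw [← ENNReal.ofReal_tsum_of_nonneg (fun n => integral_nonneg fun ω => by positivity) hsum]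
    exact ENNReal.ofReal_ne_top
  filter_upwards [ae_lt_top' (AEMeasurable.tsum hf) htsum] with ω hω
  have hpow : Tendsto (fun n => |X n ω| ^ p) atTop (nhds 0) := by
    have := (ENNReal.tendsto_toReal ENNReal.zero_ne_top).comp
      (ENNReal.tendsto_atTop_zero_of_tsum_ne_top hω.ne)
    simpa [f, Function.comp_def, ENNReal.toReal_ofReal, abs_nonneg] using this
  have hroot := hpow.rpow_const (p := (p : ℝ)⁻¹) (Or.inr (by positivity))
  rw [tendsto_zero_iff_abs_tendsto_zero]
  simpa [Function.comp_def, Real.pow_rpow_inv_natCast (abs_nonneg _) hp,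
    Real.zero_rpow (inv_ne_zero (Nat.cast_ne_zero.mpr hp))] using hroot

lemma memLp_of_forall_eq_zero_or_one [IsFiniteMeasure μ] {I : Ω → ℝ} (hI : Measurable I)
    (h01 : ∀ ω, I ω = 0 ∨ I ω = 1) (q : ENNReal) : MemLp I q μ :=
  MemLp.of_bound hI.aestronglyMeasurable 1
    (ae_of_all _ fun ω => by rcases h01 ω with h | h <;> simp [h])

lemma abs_inv_mul_sub_one_le {p x : ℝ} (hp : p ∈ Set.Ioc 0 1) (hx : x = 0 ∨ x = 1) :
    |p⁻¹ * x - 1| ≤ p⁻¹ := by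
  have hp1 : 1 ≤ p⁻¹ := one_le_inv₀ hp.1 |>.mpr hp.2
  rcases hx with rfl | rfl
  · simpa using hp1
  · rw [mul_one, abs_of_nonneg (by linarith)]
    linarith

section HorvitzThompson

variable [IsProbabilityMeasure μ] {I : Ω → ℝ} {p : ℝ}

lemma integral_inv_mul_sub_one (hI : Integrable I μ) (hmean : ∫ ω, I ω ∂μ = p) (hp : p ≠ 0) :
    ∫ ω, (p⁻¹ * I ω - 1) ∂μ = 0 := by
  rw [integral_sub (hI.const_mul _) (integrable_const 1), integral_const_mul, hmean,
    inv_mul_cancel₀ hp]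
  simp

lemma integral_inv_mul_sub_one_sq (hI : Integrable I μ) (h01 : ∀ ω, I ω = 0 ∨ I ω = 1)
    (hmean : ∫ ω, I ω ∂μ = p) (hp : p ≠ 0) :
    ∫ ω, (p⁻¹ * I ω - 1) ^ 2 ∂μ = p⁻¹ - 1 := by
  -- `I ^ 2 = I` makes the square affine in `I`
  have haffine : ∀ ω, (p⁻¹ * I ω - 1) ^ 2 = (p⁻¹ ^ 2 - 2 * p⁻¹) * I ω + 1 := fun ω => by
    rcases h01 ω with h | h <;> rw [h] <;> ring
  simp_rw [haffine]
  rw [integral_add (hI.const_mul _) (integrable_const 1), integral_const_mul, hmean,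
    integral_const, probReal_univ, one_smul]
  field_simp
  ring

end HorvitzThompson

theorem integral_mean_inv_mul_sub_one_pow_four_le [IsProbabilityMeasure μ] {ι : Type*}
    [Fintype ι] {p : ι → ℝ} {I : ι → Ω → ℝ} (hp : ∀ i, p i ∈ Set.Ioc 0 1)
    (hmeas : ∀ i, Measurable (I i)) (h01 : ∀ i ω, I i ω = 0 ∨ I i ω = 1)
    (hmean : ∀ i, ∫ ω, I i ω ∂μ = p i) (hind : iIndepFun I μ) {M : ℝ}
    (hM : ∀ i, (p i)⁻¹ ≤ M) :
    ∫ ω, ((Fintype.card ι : ℝ)⁻¹ * ∑ i, ((p i)⁻¹ * I i ω - 1)) ^ 4 ∂μ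
      ≤ M ^ 4 / Fintype.card ι ^ 3 + 3 * M ^ 2 / Fintype.card ι ^ 2 := by
  set n : ℝ := (Fintype.card ι : ℝ)
  set Y : ι → Ω → ℝ := fun i ω => (p i)⁻¹ * I i ω - 1
  have hbound : ∀ i ω, |Y i ω| ≤ M := fun i ω =>
    (abs_inv_mul_sub_one_le (hp i) (h01 i ω)).trans (hM i)
  have hYmeas : ∀ i, Measurable (Y i) := fun i =>
    ((hmeas i).const_mul _).sub measurable_const
  have hY : ∀ i, MemLp (Y i) 4 μ := fun i =>
    MemLp.of_bound (hYmeas i).aestronglyMeasurable M (ae_of_all _ (hbound i))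
  have hIint : ∀ i, Integrable (I i) μ := fun i =>
    (memLp_of_forall_eq_zero_or_one (hmeas i) (h01 i) 1).integrable le_rfl
  have hY0 : ∀ i, ∫ ω, Y i ω ∂μ = 0 := fun i =>
    integral_inv_mul_sub_one (hIint i) (hmean i) (hp i).1.ne'
  have hY2 : ∀ i, ∫ ω, Y i ω ^ 2 ∂μ ≤ M := fun i => by
    rw [integral_inv_mul_sub_one_sq (hIint i) (h01 i) (hmean i) (hp i).1.ne']
    linarith [hM i]
  have hY4 : ∀ i, ∫ ω, Y i ω ^ 4 ∂μ ≤ M ^ 4 := fun i => by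
    have := norm_integral_le_of_norm_le_const (μ := μ) (f := fun ω => Y i ω ^ 4)
      (ae_of_all _ fun ω => by
        simpa [norm_pow] using pow_le_pow_left₀ (abs_nonneg _) (hbound i ω) 4)
    simpa using (le_abs_self _).trans this
  have hindY : iIndepFun Y μ := hind.comp (fun i x => (p i)⁻¹ * x - 1) fun i =>
    (measurable_id.const_mul _).sub measurable_const
  have hsq : ∑ i, ∫ ω, Y i ω ^ 2 ∂μ ≤ n * M := by
    simpa [n] using sum_le_sum fun i (_ : i ∈ univ) => hY2 i
  have hquart : ∑ i, ∫ ω, Y i ω ^ 4 ∂μ ≤ n * M ^ 4 := by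
    simpa [n] using sum_le_sum fun i (_ : i ∈ univ) => hY4 i
  have hsq_nonneg : 0 ≤ ∑ i, ∫ ω, Y i ω ^ 2 ∂μ :=
    sum_nonneg fun i _ => integral_nonneg fun ω => sq_nonneg _
  simp_rw [mul_pow]
  rw [integral_const_mul]
  calc n⁻¹ ^ 4 * ∫ ω, (∑ i, Y i ω) ^ 4 ∂μ ≤ n⁻¹ ^ 4 * (n * M ^ 4 + 3 * (n * M) ^ 2) := by
        gcongr
        exact (hindY.integral_sum_pow_four_le hY hY0 univ).trans (add_le_add hquart (by gcongr))
    _ = M ^ 4 / n ^ 3 + 3 * M ^ 2 / n ^ 2 := by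
        rcases eq_or_ne n 0 with hn | hn
        · simp [hn]
        · field_simp

end

lemma summable_fourth_moment_bound {D α : ℝ} (hα : 1 / 2 < α) :
    Summable fun N : ℕ =>
      (D * N * (N : ℝ) ^ (-α)) ^ 4 / N ^ 3 + 3 * (D * N * (N : ℝ) ^ (-α)) ^ 2 / N ^ 2 := by
  refine Summable.of_nonneg_of_le (fun N => by positivity) (fun N => ?_)
    ((Real.summable_nat_rpow.mpr (by linarith : -(2 * α) < -1)).mul_left (D ^ 4 + 3 * D ^ 2))
  rcases Nat.eq_zero_or_pos N with rfl | hN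
  · simp [Real.zero_rpow (by linarith : -(2 * α) ≠ 0)]
  have hN1 : (1 : ℝ) ≤ N := by exact_mod_cast hN
  have hN0 : (0 : ℝ) < N := by positivity
  set x := (N : ℝ) ^ (-α) with hx
  have hx2 : x ^ 2 = (N : ℝ) ^ (-(2 * α)) := by
    rw [hx, ← Real.rpow_natCast, ← Real.rpow_mul hN0.le]
    ring_nf
  have hNx : N * x ^ 2 ≤ 1 := by
    rw [hx2, ← Real.rpow_one_add' hN0.le (by linarith)]
    exact Real.rpow_le_one_of_one_le_of_nonpos hN1 (by linarith)
  rw [← hx2]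
  have : (D * N * x) ^ 4 / N ^ 3 + 3 * (D * N * x) ^ 2 / N ^ 2
      = D ^ 4 * x ^ 2 * (N * x ^ 2) + 3 * D ^ 2 * x ^ 2 := by
    field_simp
  rw [this]
  have : 0 ≤ D ^ 4 * x ^ 2 := by positivity
  nlinarith

theorem poisson_inverse_probability_weights_as_convergence_general
    {Ω : Type*} [MeasureSpace Ω] [IsProbabilityMeasure (ℙ : Measure Ω)]
    (π : (N : ℕ) → Fin N → ℝ) (I : (N : ℕ) → Fin N → Ω → ℝ)
    (hπ : ∀ N i, π N i ∈ Set.Ioo (0 : ℝ) 1)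
    (hmeas : ∀ N i, Measurable (I N i))
    (h01 : ∀ N i ω, I N i ω = 0 ∨ I N i ω = 1)
    (hmean : ∀ N i, ∫ ω, I N i ω = π N i)
    (hindep : iIndepFun
      (fun p : (Σ N : ℕ, Fin N) => I p.1 p.2) ℙ)
    (n₀ : ℕ → ℝ)
    (α : ℝ) (hα : α ∈ Set.Ioc (1 / 2 : ℝ) 1)
    (c₁ c₂ : ℝ) (hc₁ : 0 < c₁)
    (hasymp : ∀ N : ℕ, 1 ≤ N → c₁ * (N : ℝ) ^ α ≤ n₀ N ∧ n₀ N ≤ c₂ * (N : ℝ) ^ α)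
    (C₁ C₂ : ℝ) (hC₁ : 0 < C₁)
    (hbound : ∀ N : ℕ, 1 ≤ N → ∀ i,
      C₁ ≤ (N : ℝ) * π N i / n₀ N ∧ (N : ℝ) * π N i / n₀ N ≤ C₂) :
    ∀ᵐ ω ∂(ℙ : Measure Ω),
      Tendsto (fun N : ℕ => (N : ℝ)⁻¹ * ∑ i, ((π N i)⁻¹ * I N i ω - 1))
        atTop (nhds 0) := by
  have hπ_Ioc : ∀ N i, π N i ∈ Set.Ioc 0 1 := fun N i => Set.Ioo_subset_Ioc_self (hπ N i)
  have hinv : ∀ N (i : Fin N), (π N i)⁻¹ ≤ (C₁ * c₁)⁻¹ * N * (N : ℝ) ^ (-α) := by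
    intro N i
    have hN : 1 ≤ N := i.pos
    have hN0 : (0 : ℝ) < N := by exact_mod_cast hN
    obtain ⟨hlow, -⟩ := hasymp N hN
    have hn₀ : 0 < n₀ N := lt_of_lt_of_le (by positivity) hlow
    have hπN : C₁ * (c₁ * (N : ℝ) ^ α) ≤ N * π N i :=
      (mul_le_mul_of_nonneg_left hlow hC₁.le).trans ((le_div_iff₀ hn₀).mp (hbound N hN i).1)
    calc (π N i)⁻¹ = N / (N * π N i) := by field_simp [(hπ N i).1.ne']
      _ ≤ N / (C₁ * (c₁ * (N : ℝ) ^ α)) := by gcongr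
      _ = (C₁ * c₁)⁻¹ * N * (N : ℝ) ^ (-α) := by
        rw [Real.rpow_neg hN0.le]
        field_simp
  have hmoment : ∀ N : ℕ, ∫ ω, ((N : ℝ)⁻¹ * ∑ i, ((π N i)⁻¹ * I N i ω - 1)) ^ 4
      ≤ ((C₁ * c₁)⁻¹ * N * (N : ℝ) ^ (-α)) ^ 4 / N ^ 3
        + 3 * ((C₁ * c₁)⁻¹ * N * (N : ℝ) ^ (-α)) ^ 2 / N ^ 2 := fun N => by
    simpa using integral_mean_inv_mul_sub_one_pow_four_le (hπ_Ioc N) (hmeas N) (h01 N) (hmean N)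
      (hindep.precomp (g := Sigma.mk N) sigma_mk_injective) (hinv N)
  refine ae_tendsto_zero_of_summable_integral_pow four_ne_zero (fun N => ?_) ?_
  · exact (memLp_finsetSum univ fun i _ => (((memLp_of_forall_eq_zero_or_one (hmeas N i)
      (h01 N i) _).const_mul _).sub (memLp_const 1))).const_mul _
  · simp_rw [Even.pow_abs (by decide : Even 4)]
    exact (summable_fourth_moment_bound hα.1).of_nonneg_of_le
      (fun N => integral_nonneg fun ω => by positivity) hmoment

/-- Almost sure convergence of inverse-probability weights under Poisson
sampling: if `C₁ ≤ N π_{N,i} / n₀ ≤ C₂` for all `i` and `n₀ ≍ N^α` with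
`α ∈ (1/2, 1]`, then `N⁻¹ ∑ i, (π_{N,i}⁻¹ I_{N,i} - 1) → 0` almost surely,
where for each `N` the `I_{N,i}` are independent Bernoulli(`π_{N,i}`)
indicators, independently across `N`. -/
theorem poisson_inverse_probability_weights_as_convergence
    {Ω : Type*} [MeasureSpace Ω] [IsProbabilityMeasure (ℙ : Measure Ω)]
    (π : (N : ℕ) → Fin N → ℝ) (I : (N : ℕ) → Fin N → Ω → ℝ)
    (hπ : ∀ N i, π N i ∈ Set.Ioo (0 : ℝ) 1)
    (hmeas : ∀ N i, Measurable (I N i))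
    (h01 : ∀ N i ω, I N i ω = 0 ∨ I N i ω = 1)
    (hmean : ∀ N i, ∫ ω, I N i ω = π N i)
    (hindep : iIndepFun
      (fun p : (Σ N : ℕ, Fin N) => I p.1 p.2) ℙ)
    (n₀ : ℕ → ℝ) (hn₀ : ∀ N, n₀ N = ∑ i, π N i)
    (α : ℝ) (hα : α ∈ Set.Ioc (1 / 2 : ℝ) 1)
    (c₁ c₂ : ℝ) (hc₁ : 0 < c₁)
    (hasymp : ∀ N : ℕ, 1 ≤ N → c₁ * (N : ℝ) ^ α ≤ n₀ N ∧ n₀ N ≤ c₂ * (N : ℝ) ^ α)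
    (C₁ C₂ : ℝ) (hC₁ : 0 < C₁) (hC₁₂ : C₁ ≤ C₂)
    (hbound : ∀ N : ℕ, 1 ≤ N → ∀ i,
      C₁ ≤ (N : ℝ) * π N i / n₀ N ∧ (N : ℝ) * π N i / n₀ N ≤ C₂) :
    ∀ᵐ ω ∂(ℙ : Measure Ω),
      Tendsto (fun N : ℕ => (N : ℝ)⁻¹ * ∑ i, ((π N i)⁻¹ * I N i ω - 1))
        atTop (nhds 0) :=
  poisson_inverse_probability_weights_as_convergence_general π I hπ hmeas h01 hmean hindep n₀ α hα
    c₁ c₂ hc₁ hasymp C₁ C₂ hC₁ hbound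
end
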